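/- arXiv:math/0605330 — 2 statements merged into one kernel-verified Lean document; each statement's English description precedes it below -/
import Mathlib

section
/- Let R be a commutative Noetherian ring of prime characteristic p, H a left R[x,f]-module, and K = {h ∈ H : xh = 0}. If a ∈ R satisfies aK = 0, then a^2 Γ_x(H) = 0, i.e., a^2 h = 0 for every h ∈ H with x^j h = 0 for some j ≥ 1. -/
/-- Hartshorne–Speiser Lemma 1.10: let `H` be a left `R[x,f]`-module (encoded via the
Frobenius-semilinear additive map `x : H →+ H`) and `K = {h ∈ H : x h = 0}`.  If
`a ∈ R` satisfies `a K = 0`, then `a² Γ_x(H) = 0`, i.e. `a² • h = 0` for every `h ∈ H`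
with `x^j h = 0` for some `j ≥ 1`. -/
theorem sq_annihilates_gamma_x
    (R : Type*) [CommRing R] [IsNoetherianRing R] (p : ℕ) [Fact p.Prime] [CharP R p]
    (H : Type*) [AddCommGroup H] [Module R H] (x : H →+ H)
    (hx : ∀ (r : R) (h : H), x (r • h) = r ^ p • x h)
    (a : R) (ha : ∀ h : H, x h = 0 → a • h = 0) :
    ∀ h : H, (∃ j : ℕ, 1 ≤ j ∧ (⇑x)^[j] h = 0) → a ^ 2 • h = 0 := by
  intro h ⟨j, hj1, hjh⟩
  clear hj1
  induction j generalizing h with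
  | zero => simp only [Function.iterate_zero, id_eq] at hjh; simp [hjh]
  | succ n ih =>
    have h1 : (⇑x)^[n] (x h) = 0 := by
      rw [← Function.iterate_succ_apply]; exact hjh
    have h2 : a ^ 2 • x h = 0 := ih _ h1
    have h3 : x (a • h) = 0 := by
      rw [hx]
      have hp2 : 2 ≤ p := (Fact.out : p.Prime).two_le
      have hsplit : a ^ p = a ^ (p - 2) * a ^ 2 := by
        rw [← pow_add]; congr 1; omega
      rw [hsplit, mul_smul, h2, smul_zero]
    have := ha _ h3
    rw [sq, mul_smul]; exact this
end

section
/- Let (R,m) be a commutative Noetherian local ring of prime characteristic p with dim R = 0, and let H be a left R[x,f]-module which is Artinian as an R-module. Then H has finite length over R, and there exists e ∈ ℕ₀ with x^e Γ_x(H) = 0. -/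
open IsLocalRing

section HSLAux

universe v

variable {R : Type*} [CommRing R] [IsLocalRing R]

lemma hsl_prime_eq_max (hdim : ringKrullDim R = 0)
    (P : Ideal R) (hP : P.IsPrime) : P = maximalIdeal R := by
  by_contra hne
  have hlt : P < maximalIdeal R := lt_of_le_of_ne (le_maximalIdeal hP.ne_top) hne
  have hlt' : (⟨P, hP⟩ : PrimeSpectrum R) <
      ⟨maximalIdeal R, (maximalIdeal.isMaximal R).isPrime⟩ := hlt
  let s : LTSeries (PrimeSpectrum R) :=
    (RelSeries.singleton _ (⟨P, hP⟩ : PrimeSpectrum R)).snoc _ hlt'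
  have hle := Order.LTSeries.length_le_krullDim s
  have hlen : s.length = 1 := rfl
  rw [hlen] at hle
  rw [show Order.krullDim (PrimeSpectrum R) = ringKrullDim R from rfl, hdim] at hle
  exact absurd hle (by norm_num)

lemma hsl_nilpotent_max (hdim : ringKrullDim R = 0) [IsNoetherianRing R] :
    IsNilpotent (maximalIdeal R) := by
  have h := IsNoetherianRing.isNilpotent_nilradical R
  have heq : nilradical R = maximalIdeal R := by
    rw [nilradical_eq_sInf]
    refine le_antisymm (sInf_le (maximalIdeal.isMaximal R).isPrime) (le_sInf ?_)
    intro J hJ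
    rw [hsl_prime_eq_max hdim J hJ]
  rwa [heq] at h

lemma hsl_noeth_of_torsion {M : Type*} [AddCommGroup M] [Module R M] [IsArtinian R M]
    (hM : Module.IsTorsionBySet R M (maximalIdeal R)) : IsNoetherian R M := by
  letI : Field (R ⧸ maximalIdeal R) := Ideal.Quotient.field _
  letI : Module (R ⧸ maximalIdeal R) M := hM.module
  haveI : IsScalarTower R (R ⧸ maximalIdeal R) M := hM.isScalarTower
  haveI : IsArtinian (R ⧸ maximalIdeal R) M := isArtinian_of_tower R inferInstance
  haveI : IsSemisimpleModule (R ⧸ maximalIdeal R) M := inferInstance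
  have htfae := IsSemisimpleModule.finite_tfae (R := R ⧸ maximalIdeal R) (M := M)
  have h21 : IsArtinian (R ⧸ maximalIdeal R) M ↔ IsNoetherian (R ⧸ maximalIdeal R) M :=
    htfae.out 2 1
  haveI hnoe : IsNoetherian (R ⧸ maximalIdeal R) M := h21.mp inferInstance
  rw [isNoetherian_iff]
  let f : Submodule R M → Submodule (R ⧸ maximalIdeal R) M := fun N =>
    { carrier := N
      add_mem' := fun ha hb => N.add_mem ha hb
      zero_mem' := N.zero_mem
      smul_mem' := by
        intro c m hm
        induction c using Quotient.inductionOn' with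
        | h r =>
          have h2 : (Ideal.Quotient.mk (maximalIdeal R) r) • m = r • m := hM.mk_smul r m
          show Submodule.Quotient.mk r • m ∈ N
          rw [show (Submodule.Quotient.mk r : R ⧸ maximalIdeal R) • m = r • m from h2]
          exact N.smul_mem r hm }
  have hmono : ∀ {N N' : Submodule R M}, N < N' → f N < f N' := by
    intro N N' h
    refine lt_of_le_of_ne (fun a ha => h.le ha) (fun e => h.ne ?_)
    apply le_antisymm h.le
    intro a ha
    have : a ∈ f N' := ha
    rw [← e] at this
    exact this
  exact Subrelation.wf (fun {a b} h => hmono h) (InvImage.wf f (isNoetherian_iff.mp hnoe))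

lemma hsl_noeth_of_pow_smul :
    ∀ (n : ℕ) (M : Type v) [AddCommGroup M] [Module R M] [IsArtinian R M],
      (maximalIdeal R) ^ n • (⊤ : Submodule R M) = ⊥ → IsNoetherian R M := by
  intro n
  induction n with
  | zero =>
    intro M _ _ _ h
    rw [pow_zero, Ideal.one_eq_top, Submodule.top_smul] at h
    haveI : Subsingleton M := subsingleton_of_forall_eq 0 fun y => by
      have : y ∈ (⊥ : Submodule R M) := h ▸ Submodule.mem_top
      simpa using this
    infer_instance
  | succ n ih =>
    intro M _ _ _ h
    set N := maximalIdeal R • (⊤ : Submodule R M) with hN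
    have h1 : IsNoetherian R (M ⧸ N) :=
      hsl_noeth_of_torsion (Module.isTorsionBySet_quotient_ideal_smul M (maximalIdeal R))
    have h2 : IsNoetherian R N := by
      apply ih N
      rw [eq_bot_iff]
      rw [Submodule.smul_le]
      rintro r hr ⟨y, hy⟩ -
      have hmem : r • y ∈ (maximalIdeal R) ^ (n + 1) • (⊤ : Submodule R M) := by
        rw [pow_succ, mul_smul]
        exact Submodule.smul_mem_smul hr hy
      rw [h] at hmem
      simp only [Submodule.mem_bot] at hmem ⊢
      exact Subtype.ext (by simpa using hmem)
    exact (isNoetherian_iff_submodule_quotient N).mpr ⟨h2, h1⟩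

end HSLAux

/-- Base case of the Hartshorne–Speiser–Lyubeznik theorem: if `(R,m)` is a
zero-dimensional Noetherian local ring of prime characteristic `p` and `H` is a left
`R[x,f]`-module (encoded via the Frobenius-semilinear additive map `x : H →+ H`) that
is Artinian as an `R`-module, then `H` has finite length over `R` and there is
`e ∈ ℕ` with `x^e Γ_x(H) = 0`. -/
theorem hsl_dim_zero
    (R : Type*) [CommRing R] [IsLocalRing R] [IsNoetherianRing R]
    (hdim : ringKrullDim R = 0)
    (p : ℕ) [Fact p.Prime] [CharP R p]
    (H : Type*) [AddCommGroup H] [Module R H] [IsArtinian R H] (x : H →+ H)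
    (hx : ∀ (r : R) (h : H), x (r • h) = r ^ p • x h) :
    IsFiniteLength R H ∧
      ∃ e : ℕ, ∀ h : H, (∃ j : ℕ, 1 ≤ j ∧ (⇑x)^[j] h = 0) → (⇑x)^[e] h = 0 := by
  -- `H` is Noetherian over `R`
  obtain ⟨n, hn⟩ := hsl_nilpotent_max hdim
  haveI hnoeth : IsNoetherian R H := by
    apply hsl_noeth_of_pow_smul n H
    rw [hn]
    exact Submodule.bot_smul _
  refine ⟨isFiniteLength_iff_isNoetherian_isArtinian.mpr ⟨hnoeth, inferInstance⟩, ?_⟩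
  -- semilinearity of iterates
  have hiter : ∀ (j : ℕ) (r : R) (h : H), (⇑x)^[j] (r • h) = r ^ (p ^ j) • (⇑x)^[j] h := by
    intro j
    induction j with
    | zero => intro r h; simp
    | succ j ih =>
      intro r h
      rw [Function.iterate_succ_apply, Function.iterate_succ_apply, hx, ih, ← pow_mul,
        ← pow_succ']
  have hzero : ∀ j : ℕ, (⇑x)^[j] (0 : H) = 0 := by
    intro j
    induction j with
    | zero => simp
    | succ j ihh => rw [Function.iterate_succ_apply', ihh, map_zero]
  have hadd : ∀ (j : ℕ) (a b : H), (⇑x)^[j] (a + b) = (⇑x)^[j] a + (⇑x)^[j] b := by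
    intro j
    induction j with
    | zero => intro a b; simp
    | succ j ihh =>
      intro a b
      rw [Function.iterate_succ_apply', Function.iterate_succ_apply',
        Function.iterate_succ_apply', ← map_add, ihh]
  -- the chain of kernels of iterates
  let K : ℕ → Submodule R H := fun j =>
    { carrier := {h | (⇑x)^[j] h = 0}
      add_mem' := by
        intro a b ha hb
        simp only [Set.mem_setOf_eq] at ha hb ⊢
        rw [hadd j a b, ha, hb, add_zero]
      zero_mem' := by
        show (⇑x)^[j] 0 = 0
        exact hzero j
      smul_mem' := by
        intro r h hh
        simp only [Set.mem_setOf_eq] at hh ⊢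
        rw [hiter, hh, smul_zero] }
  have hKmem : ∀ (j : ℕ) (h : H), h ∈ K j ↔ (⇑x)^[j] h = 0 := fun _ _ => Iff.rfl
  have hKmono : Monotone K := by
    apply monotone_nat_of_le_succ
    intro j h hh
    rw [hKmem] at hh ⊢
    rw [Function.iterate_succ_apply', hh, map_zero]
  obtain ⟨e, he⟩ := monotone_stabilizes_iff_noetherian.mpr hnoeth ⟨K, hKmono⟩
  refine ⟨e, ?_⟩
  rintro h ⟨j, -, hj⟩
  have h1 : h ∈ K (max j e) := hKmono (le_max_left j e) hj
  have h2 : K e = K (max j e) := he (max j e) (le_max_right j e)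
  rw [← h2] at h1
  exact h1
end
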